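/- Let M ⊂ ℝⁿ be a nonempty closed convex set. The map g(x, V) = ‖x - Π_M^V(x)‖_V² = (x - Π_M^V(x))ᵀ V (x - Π_M^V(x)) is jointly continuous on ℝⁿ × S^n_{++}. -/

import Mathlib

open Matrix

/-- The quadratic form `v ↦ vᵀ V v`. -/
def quadForm {n : ℕ} (V : Matrix (Fin n) (Fin n) ℝ) (v : Fin n → ℝ) : ℝ :=
  v ⬝ᵥ V.mulVec v

/-- `p` is the orthogonal projection of `x` onto `M` under the inner product induced by `V`. -/
def IsProjOn {n : ℕ} (V : Matrix (Fin n) (Fin n) ℝ) (M : Set (Fin n → ℝ))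
    (x p : Fin n → ℝ) : Prop :=
  p ∈ M ∧ ∀ m ∈ M, quadForm V (x - p) ≤ quadForm V (x - m)

/-- entrywise ℓ¹ "size" of a matrix -/
def matS {n : ℕ} (V : Matrix (Fin n) (Fin n) ℝ) : ℝ := ∑ i, ∑ j, |V i j|

lemma matS_nonneg {n : ℕ} (V : Matrix (Fin n) (Fin n) ℝ) : 0 ≤ matS V :=
  Finset.sum_nonneg fun i _ => Finset.sum_nonneg fun j _ => abs_nonneg _

lemma matS_sub_comm {n : ℕ} (V W : Matrix (Fin n) (Fin n) ℝ) :
    matS (V - W) = matS (W - V) := by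
  unfold matS
  refine Finset.sum_congr rfl fun i _ => Finset.sum_congr rfl fun j _ => ?_
  simp [Matrix.sub_apply, abs_sub_comm]

lemma matS_le_add {n : ℕ} (V W : Matrix (Fin n) (Fin n) ℝ) :
    matS V ≤ matS W + matS (V - W) := by
  unfold matS
  rw [← Finset.sum_add_distrib]
  refine Finset.sum_le_sum fun i _ => ?_
  rw [← Finset.sum_add_distrib]
  refine Finset.sum_le_sum fun j _ => ?_
  have := abs_sub_abs_le_abs_sub (V i j) (W i j)
  simp only [Matrix.sub_apply]
  linarith

lemma dot_mulVec_eq_sum {n : ℕ} (V : Matrix (Fin n) (Fin n) ℝ) (u w : Fin n → ℝ) :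
    u ⬝ᵥ V.mulVec w = ∑ i, ∑ j, u i * V i j * w j := by
  simp [dotProduct, Matrix.mulVec, Finset.mul_sum, mul_assoc]

lemma abs_dot_mulVec_le {n : ℕ} (V : Matrix (Fin n) (Fin n) ℝ) (u w : Fin n → ℝ) :
    |u ⬝ᵥ V.mulVec w| ≤ matS V * ‖u‖ * ‖w‖ := by
  rw [dot_mulVec_eq_sum]
  calc |∑ i, ∑ j, u i * V i j * w j| ≤ ∑ i, ∑ j, |u i * V i j * w j| :=
        (Finset.abs_sum_le_sum_abs _ _).trans (Finset.sum_le_sum fun i _ =>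
          Finset.abs_sum_le_sum_abs _ _)
    _ ≤ ∑ i, ∑ j, |V i j| * ‖u‖ * ‖w‖ := by
        refine Finset.sum_le_sum fun i _ => Finset.sum_le_sum fun j _ => ?_
        have h1 : |u i| ≤ ‖u‖ := by
          simpa [Real.norm_eq_abs] using norm_le_pi_norm u i
        have h3 : |w j| ≤ ‖w‖ := by
          simpa [Real.norm_eq_abs] using norm_le_pi_norm w j
        rw [abs_mul, abs_mul]
        calc |u i| * |V i j| * |w j| ≤ ‖u‖ * |V i j| * ‖w‖ := by
              exact mul_le_mul (mul_le_mul h1 le_rfl (abs_nonneg _) (norm_nonneg _)) h3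
                (abs_nonneg _) (by positivity)
          _ = |V i j| * ‖u‖ * ‖w‖ := by ring
    _ = matS V * ‖u‖ * ‖w‖ := by
        unfold matS
        rw [Finset.sum_mul, Finset.sum_mul]
        refine Finset.sum_congr rfl fun i _ => ?_
        rw [Finset.sum_mul, Finset.sum_mul]

lemma abs_quadForm_le {n : ℕ} (V : Matrix (Fin n) (Fin n) ℝ) (v : Fin n → ℝ) :
    |quadForm V v| ≤ matS V * ‖v‖ ^ 2 := by
  have := abs_dot_mulVec_le V v v
  simpa [quadForm, sq, mul_assoc] using this

lemma quadForm_sub_mat {n : ℕ} (V W : Matrix (Fin n) (Fin n) ℝ) (v : Fin n → ℝ) :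
    quadForm V v - quadForm W v = v ⬝ᵥ (V - W).mulVec v := by
  simp [quadForm, Matrix.sub_mulVec, dotProduct_sub]

lemma quadForm_sub_vec {n : ℕ} (V : Matrix (Fin n) (Fin n) ℝ) (a b : Fin n → ℝ) :
    quadForm V a - quadForm V b = (a - b) ⬝ᵥ V.mulVec a + b ⬝ᵥ V.mulVec (a - b) := by
  simp only [quadForm, Matrix.mulVec_sub, sub_dotProduct, dotProduct_sub]
  ring

lemma quadForm_smul {n : ℕ} (V : Matrix (Fin n) (Fin n) ℝ) (a : ℝ) (v : Fin n → ℝ) :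
    quadForm V (a • v) = a ^ 2 * quadForm V v := by
  simp only [quadForm, Matrix.mulVec_smul, dotProduct_smul, smul_dotProduct, smul_eq_mul]
  ring

lemma quadForm_pos {n : ℕ} {W : Matrix (Fin n) (Fin n) ℝ} (hW : W.PosDef)
    {v : Fin n → ℝ} (hv : v ≠ 0) : 0 < quadForm W v := by
  have := hW.dotProduct_mulVec_pos hv
  simpa [quadForm] using this

lemma continuous_quadForm {n : ℕ} (W : Matrix (Fin n) (Fin n) ℝ) :
    Continuous fun v : Fin n → ℝ => quadForm W v := by
  simp only [quadForm, dot_mulVec_eq_sum]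
  exact continuous_finset_sum _ fun i _ => continuous_finset_sum _ fun j _ =>
    ((continuous_apply i).mul continuous_const).mul (continuous_apply j)

lemma posdef_coercive {n : ℕ} {W : Matrix (Fin n) (Fin n) ℝ} (hW : W.PosDef) :
    ∃ c > 0, ∀ v : Fin n → ℝ, c * ‖v‖ ^ 2 ≤ quadForm W v := by
  rcases Nat.eq_zero_or_pos n with hn | hn
  · refine ⟨1, one_pos, fun v => ?_⟩
    subst hn
    have hv : v = 0 := Subsingleton.elim v 0
    rw [hv, norm_zero]
    simp [quadForm]
  · haveI : NeZero n := ⟨hn.ne'⟩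
    have hsne : (Metric.sphere (0 : Fin n → ℝ) 1).Nonempty := by
      obtain ⟨x, hx⟩ := exists_norm_eq (Fin n → ℝ) (zero_le_one (α := ℝ))
      exact ⟨x, by simpa [Metric.mem_sphere, dist_zero_right] using hx⟩
    obtain ⟨u, hu, hmin⟩ := (isCompact_sphere (0 : Fin n → ℝ) 1).exists_isMinOn hsne
      (continuous_quadForm W).continuousOn
    have hu1 : ‖u‖ = 1 := by simpa [Metric.mem_sphere, dist_zero_right] using hu
    have hu0 : u ≠ 0 := by
      intro h; rw [h] at hu1; simp at hu1
    refine ⟨quadForm W u, quadForm_pos hW hu0, fun v => ?_⟩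
    rcases eq_or_ne v 0 with rfl | hv
    · simp [quadForm]
    · have hvn : (0:ℝ) < ‖v‖ := norm_pos_iff.mpr hv
      have hmem : ‖v‖⁻¹ • v ∈ Metric.sphere (0 : Fin n → ℝ) 1 := by
        simp [Metric.mem_sphere, dist_zero_right, norm_smul, abs_of_pos (inv_pos.mpr hvn),
          inv_mul_cancel₀ hvn.ne']
      have h1 : quadForm W u ≤ quadForm W (‖v‖⁻¹ • v) := hmin hmem
      rw [quadForm_smul] at h1
      have := mul_le_mul_of_nonneg_right h1 (le_of_lt (pow_pos hvn 2))
      calc quadForm W u * ‖v‖ ^ 2 ≤ (‖v‖⁻¹ ^ 2 * quadForm W v) * ‖v‖ ^ 2 := this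
        _ = quadForm W v := by field_simp

lemma quad_close {n : ℕ} (V W : Matrix (Fin n) (Fin n) ℝ) (a b : Fin n → ℝ) :
    quadForm V a - quadForm W b ≤
      matS V * ‖a - b‖ * (‖a‖ + ‖b‖) + matS (V - W) * ‖b‖ ^ 2 := by
  have h1 := quadForm_sub_vec V a b
  have h2 := quadForm_sub_mat V W b
  have e : quadForm V a - quadForm W b =
      (a - b) ⬝ᵥ V.mulVec a + b ⬝ᵥ V.mulVec (a - b) + b ⬝ᵥ (V - W).mulVec b := by
    linear_combination h1 + h2
  have t3 : (a - b) ⬝ᵥ V.mulVec a ≤ matS V * ‖a - b‖ * ‖a‖ :=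
    (le_abs_self _).trans (abs_dot_mulVec_le V (a - b) a)
  have t4 : b ⬝ᵥ V.mulVec (a - b) ≤ matS V * ‖b‖ * ‖a - b‖ :=
    (le_abs_self _).trans (abs_dot_mulVec_le V b (a - b))
  have t5 : b ⬝ᵥ (V - W).mulVec b ≤ matS (V - W) * ‖b‖ * ‖b‖ :=
    (le_abs_self _).trans (abs_dot_mulVec_le (V - W) b b)
  rw [e]
  nlinarith [t3, t4, t5]

lemma err_bound {n : ℕ} (V W : Matrix (Fin n) (Fin n) ℝ) (a b : Fin n → ℝ)
    {D R d e₂ : ℝ} (hSV : matS V ≤ D) (hD0 : 0 < D) (hab : ‖a - b‖ < d)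
    (ha : ‖a‖ ≤ R) (hb : ‖b‖ ≤ R) (hR : 0 < R) (hVW : matS (V - W) ≤ e₂) :
    quadForm V a - quadForm W b < D * d * (2 * R) + e₂ * R ^ 2 := by
  have h := quad_close V W a b
  have hS0 := matS_nonneg V
  have hSW0 := matS_nonneg (V - W)
  have hab0 := norm_nonneg (a - b)
  have ha0 := norm_nonneg a
  have hb0 := norm_nonneg b
  have k1 : matS V * ‖a - b‖ * (‖a‖ + ‖b‖) < D * d * (2 * R) := by
    have step1 : matS V * ‖a - b‖ * (‖a‖ + ‖b‖) ≤ D * ‖a - b‖ * (2 * R) := by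
      have m1 : matS V * ‖a - b‖ ≤ D * ‖a - b‖ := mul_le_mul_of_nonneg_right hSV hab0
      have m2 : ‖a‖ + ‖b‖ ≤ 2 * R := by linarith
      exact mul_le_mul m1 m2 (by positivity) (by positivity)
    have step2 : D * ‖a - b‖ * (2 * R) < D * d * (2 * R) := by
      have : 0 < D * (2 * R) := by positivity
      nlinarith
    linarith
  have k2 : matS (V - W) * ‖b‖ ^ 2 ≤ e₂ * R ^ 2 :=
    mul_le_mul hVW (pow_le_pow_left₀ hb0 hb 2) (sq_nonneg _) (hSW0.trans hVW)
  linarith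

set_option maxHeartbeats 2000000 in
theorem squared_projection_error_continuity
    {n : ℕ} (M : Set (Fin n → ℝ)) (hMne : M.Nonempty) (hMcl : IsClosed M)
    (hMcv : Convex ℝ M)
    (f : (Fin n → ℝ) × Matrix (Fin n) (Fin n) ℝ → Fin n → ℝ)
    (hf : ∀ x : Fin n → ℝ, ∀ V : Matrix (Fin n) (Fin n) ℝ, V.PosDef →
        IsProjOn V M x (f (x, V)))
    (g : (Fin n → ℝ) × Matrix (Fin n) (Fin n) ℝ → ℝ)
    (hg : ∀ p : (Fin n → ℝ) × Matrix (Fin n) (Fin n) ℝ,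
        g p = quadForm p.2 (p.1 - f p)) :
    ContinuousOn g {p : (Fin n → ℝ) × Matrix (Fin n) (Fin n) ℝ | p.2.PosDef} := by
  intro q₀ hq₀
  obtain ⟨y, W⟩ := q₀
  simp only [Set.mem_setOf_eq] at hq₀
  show Filter.Tendsto g _ _
  rw [Metric.tendsto_nhds]
  intro ε hε
  obtain ⟨c, hc, hcoer⟩ := posdef_coercive hq₀
  obtain ⟨m₀, hm₀⟩ := hMne
  have hproj' := hf y W hq₀
  set p' := f (y, W) with hp'def
  -- constants
  set D : ℝ := matS W + 1 with hDdef
  have hD0 : 0 < D := by have := matS_nonneg W; simp only [hDdef]; linarith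
  set B : ℝ := D * (‖y - m₀‖ + 1) ^ 2 with hBdef
  have hB0 : 0 < B := by positivity
  set ρ : ℝ := Real.sqrt (2 * B / c) with hρdef
  have hρ0 : 0 ≤ ρ := Real.sqrt_nonneg _
  set R : ℝ := ρ + ‖y - p'‖ + 1 with hRdef
  have hR1 : 1 ≤ R := by have := norm_nonneg (y - p'); simp only [hRdef]; linarith
  have hR0 : 0 < R := by linarith
  set δ₁ : ℝ := min 1 (ε / 2 / (2 * D * R)) with hδ₁def
  set δ₂ : ℝ := min (min 1 (c / 2)) (ε / 2 / (R ^ 2 + 1)) with hδ₂def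
  have hδ₁0 : 0 < δ₁ := lt_min one_pos (by positivity)
  have hδ₂0 : 0 < δ₂ := lt_min (lt_min one_pos (by positivity)) (by positivity)
  have hδ₁1 : δ₁ ≤ 1 := min_le_left _ _
  have hδ₁ε : δ₁ ≤ ε / 2 / (2 * D * R) := min_le_right _ _
  have hδ₂1 : δ₂ ≤ 1 := (min_le_left _ _).trans (min_le_left _ _)
  have hδ₂c : δ₂ ≤ c / 2 := (min_le_left _ _).trans (min_le_right _ _)
  have hδ₂ε : δ₂ ≤ ε / 2 / (R ^ 2 + 1) := min_le_right _ _
  -- eventual facts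
  have h1 : ∀ᶠ q in nhds (y, W), ‖q.1 - y‖ < δ₁ := by
    have hcont : Continuous fun q : (Fin n → ℝ) × Matrix (Fin n) (Fin n) ℝ =>
        ‖q.1 - y‖ := (continuous_fst.sub continuous_const).norm
    have ht : Filter.Tendsto (fun q : (Fin n → ℝ) × Matrix (Fin n) (Fin n) ℝ =>
        ‖q.1 - y‖) (nhds (y, W)) (nhds 0) := by
      have := hcont.tendsto (y, W)
      simpa using this
    exact ht.eventually_lt_const hδ₁0
  have h2 : ∀ᶠ q in nhds (y, W), matS (q.2 - W) < δ₂ := by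
    have hcont : Continuous fun q : (Fin n → ℝ) × Matrix (Fin n) (Fin n) ℝ =>
        matS (q.2 - W) := by
      unfold matS
      refine continuous_finset_sum _ fun i _ => continuous_finset_sum _ fun j _ => ?_
      have hentry : Continuous fun q : (Fin n → ℝ) × Matrix (Fin n) (Fin n) ℝ =>
          q.2 i j := (continuous_apply j).comp ((continuous_apply i).comp continuous_snd)
      simp only [Matrix.sub_apply]
      exact (hentry.sub continuous_const).abs
    have ht : Filter.Tendsto (fun q : (Fin n → ℝ) × Matrix (Fin n) (Fin n) ℝ =>
        matS (q.2 - W)) (nhds (y, W)) (nhds 0) := by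
      have := hcont.tendsto (y, W)
      simpa [matS] using this
    exact ht.eventually_lt_const hδ₂0
  filter_upwards [h1.filter_mono nhdsWithin_le_nhds, h2.filter_mono nhdsWithin_le_nhds,
    self_mem_nhdsWithin] with q hq1 hq2 hq3
  obtain ⟨x, V⟩ := q
  simp only [Set.mem_setOf_eq] at hq3
  simp only at hq1 hq2
  have hprojx := hf x V hq3
  set p : Fin n → ℝ := f (x, V) with hpdef
  -- matS V bound
  have hSV : matS V ≤ D := by
    have := matS_le_add V W
    simp only [hDdef]; linarith
  -- coercivity for V
  have hco : ∀ v : Fin n → ℝ, c / 2 * ‖v‖ ^ 2 ≤ quadForm V v := by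
    intro v
    have h := abs_dot_mulVec_le (V - W) v v
    have h' := quadForm_sub_mat V W v
    have hWv := hcoer v
    have hlow : -(matS (V - W) * ‖v‖ * ‖v‖) ≤ quadForm V v - quadForm W v := by
      rw [h']; linarith [neg_abs_le (v ⬝ᵥ (V - W).mulVec v)]
    have hm : matS (V - W) * ‖v‖ * ‖v‖ ≤ c / 2 * ‖v‖ ^ 2 := by
      have hb : matS (V - W) ≤ c / 2 := le_of_lt (lt_of_lt_of_le hq2 hδ₂c)
      nlinarith [sq_nonneg ‖v‖, matS_nonneg (V - W), norm_nonneg v]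
    nlinarith
  -- bound on g (x, V)
  have hgq : g (x, V) = quadForm V (x - p) := hg (x, V)
  have hgp₀ : g (y, W) = quadForm W (y - p') := hg (y, W)
  have hxm : ‖x - m₀‖ ≤ ‖y - m₀‖ + 1 := by
    have : x - m₀ = (x - y) + (y - m₀) := by abel
    rw [this]
    have := norm_add_le (x - y) (y - m₀)
    linarith
  have hgB : quadForm V (x - p) ≤ B := by
    have hstep : quadForm V (x - p) ≤ quadForm V (x - m₀) := hprojx.2 m₀ hm₀
    have habs : quadForm V (x - m₀) ≤ matS V * ‖x - m₀‖ ^ 2 :=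
      (le_abs_self _).trans (abs_quadForm_le V (x - m₀))
    have hmul : matS V * ‖x - m₀‖ ^ 2 ≤ D * (‖y - m₀‖ + 1) ^ 2 :=
      mul_le_mul hSV (pow_le_pow_left₀ (norm_nonneg _) hxm 2) (sq_nonneg _)
        (le_of_lt hD0)
    simp only [hBdef]; linarith
  -- bound on ‖x - p‖
  have hxpρ : ‖x - p‖ ≤ ρ := by
    have h1' : c / 2 * ‖x - p‖ ^ 2 ≤ B := (hco (x - p)).trans hgB
    have h2' : ‖x - p‖ ^ 2 ≤ 2 * B / c := by
      rw [le_div_iff₀ hc]; linarith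
    have h3' : ‖x - p‖ = Real.sqrt (‖x - p‖ ^ 2) := (Real.sqrt_sq (norm_nonneg _)).symm
    rw [h3', hρdef]
    exact Real.sqrt_le_sqrt h2'
  -- norm bounds
  have hxp' : ‖x - p'‖ ≤ R := by
    have he : x - p' = (x - y) + (y - p') := by abel
    rw [he]
    have := norm_add_le (x - y) (y - p')
    simp only [hRdef]; linarith
  have hyp' : ‖y - p'‖ ≤ R := by simp only [hRdef]; linarith
  have hyp : ‖y - p‖ ≤ R := by
    have he : y - p = (y - x) + (x - p) := by abel
    rw [he]
    have h := norm_add_le (y - x) (x - p)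
    have h' : ‖y - x‖ = ‖x - y‖ := norm_sub_rev y x
    have h'' := norm_nonneg (y - p')
    simp only [hRdef]; linarith
  have hxpR : ‖x - p‖ ≤ R := by
    have h'' := norm_nonneg (y - p')
    simp only [hRdef]; linarith
  -- the total error allowance
  have hbound : D * δ₁ * (2 * R) + δ₂ * R ^ 2 ≤ ε := by
    have h2DR : (0:ℝ) < 2 * D * R := by positivity
    have t1 : D * δ₁ * (2 * R) ≤ ε / 2 := by
      have := mul_le_mul_of_nonneg_right hδ₁ε (le_of_lt h2DR)
      rw [div_mul_cancel₀ _ (ne_of_gt h2DR)] at this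
      nlinarith
    have hR2 : (0:ℝ) < R ^ 2 + 1 := by positivity
    have t2 : δ₂ * R ^ 2 ≤ ε / 2 := by
      have h := mul_le_mul_of_nonneg_right hδ₂ε (le_of_lt hR2)
      rw [div_mul_cancel₀ _ (ne_of_gt hR2)] at h
      nlinarith [sq_nonneg R, hδ₂0]
    calc D * δ₁ * (2 * R) + δ₂ * R ^ 2 ≤ ε / 2 + ε / 2 := add_le_add t1 t2
      _ = ε := by ring
  -- direction 1 : g (x,V) - g (y,W) < ε
  have dir1 : g (x, V) - g (y, W) < D * δ₁ * (2 * R) + δ₂ * R ^ 2 := by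
    have hle : quadForm V (x - p) ≤ quadForm V (x - p') := hprojx.2 p' hproj'.1
    have hsub : (x - p') - (y - p') = x - y := by abel
    have herr : quadForm V (x - p') - quadForm W (y - p') <
        D * δ₁ * (2 * R) + δ₂ * R ^ 2 := by
      refine err_bound V W (x - p') (y - p') hSV hD0 ?_ hxp' hyp' hR0 (le_of_lt hq2)
      rw [hsub]; exact hq1
    rw [hgq, hgp₀]; linarith
  -- direction 2 : g (y,W) - g (x,V) < ε
  have dir2 : g (y, W) - g (x, V) < D * δ₁ * (2 * R) + δ₂ * R ^ 2 := by
    have hle : quadForm W (y - p') ≤ quadForm W (y - p) := hproj'.2 p hprojx.1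
    have hsub : (y - p) - (x - p) = y - x := by abel
    have hSW : matS W ≤ D := by simp only [hDdef]; linarith
    have hWV : matS (W - V) ≤ δ₂ := by
      rw [matS_sub_comm]; exact le_of_lt hq2
    have herr : quadForm W (y - p) - quadForm V (x - p) <
        D * δ₁ * (2 * R) + δ₂ * R ^ 2 := by
      refine err_bound W V (y - p) (x - p) hSW hD0 ?_ hyp hxpR hR0 hWV
      rw [hsub, norm_sub_rev]; exact hq1
    rw [hgq, hgp₀]; linarith
  rw [Real.dist_eq, abs_lt]
  constructor <;> linarith
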